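/- Let σ : A → A⁺ be a substitution such that (X_σ, T) is minimal and is not a single periodic orbit. Then σ is tame, i.e., no letter of A_l is left isolated and no letter of A_l is right isolated. -/

import Mathlib

namespace SubstMin

variable {A : Type*}

/-- Apply a map `σ : A → A⁺` to a word by concatenation. -/
def substW (σ : A → List A) (w : List A) : List A := w.flatMap σ

/-- `n`-th iterate of the substitution applied to a word. -/
def substIter (σ : A → List A) (n : ℕ) (w : List A) : List A := (substW σ)^[n] w

/-- The set `A_l` of letters `a` with `|σⁿ(a)| → ∞`. -/
def longLetters (σ : A → List A) : Set A :=
  {a | Filter.Tendsto (fun n => (substIter σ n [a]).length) Filter.atTop Filter.atTop}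

/-- The set `A_s = A \ A_l`. -/
def shortLetters (σ : A → List A) : Set A := (longLetters σ)ᶜ

/-- `σ` is a substitution: letters map to nonempty words and `A_l ≠ ∅`. -/
def IsSubstitution (σ : A → List A) : Prop :=
  (∀ a, σ a ≠ []) ∧ (longLetters σ).Nonempty

/-- The language `L(σ)`: factors of some `σⁿ(a)`, `n ≥ 1`. -/
def lang (σ : A → List A) : Set (List A) :=
  {w | ∃ (a : A) (n : ℕ), 1 ≤ n ∧ w <:+: substIter σ n [a]}

/-- The finite factor `x[s,t]` of a bi-infinite sequence. -/
def factorOf (x : ℤ → A) (s t : ℤ) : List A :=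
  (List.range (t - s + 1).toNat).map fun i => x (s + (i : ℤ))

/-- The substitution dynamical system `X_σ`. -/
def XSub (σ : A → List A) : Set (ℤ → A) :=
  {x | ∀ s t : ℤ, s ≤ t → factorOf x s t ∈ lang σ}

/-- The left shift `T`. -/
def shiftT (x : ℤ → A) : ℤ → A := fun i => x (i + 1)

/-- A subshift is minimal if it is nonempty and has no nonempty proper closed
shift-invariant subset. -/
def IsMinimalSubshift [TopologicalSpace A] (X : Set (ℤ → A)) : Prop :=
  X.Nonempty ∧ ∀ Y : Set (ℤ → A), Y ⊆ X → Y.Nonempty → IsClosed Y →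
    shiftT '' Y = Y → Y = X

/-- `a ∈ A_l` is left isolated: `σⁿ(a) = u a w` with `u ∈ A_s⁺`, `w ∈ A*`. -/
def LeftIsolated (σ : A → List A) (a : A) : Prop :=
  ∃ n : ℕ, 1 ≤ n ∧ ∃ u w : List A, u ≠ [] ∧ (∀ b ∈ u, b ∈ shortLetters σ) ∧
    substIter σ n [a] = u ++ a :: w

/-- `a ∈ A_l` is right isolated: `σᵐ(a) = w a u` with `u ∈ A_s⁺`, `w ∈ A*`. -/
def RightIsolated (σ : A → List A) (a : A) : Prop :=
  ∃ n : ℕ, 1 ≤ n ∧ ∃ u w : List A, u ≠ [] ∧ (∀ b ∈ u, b ∈ shortLetters σ) ∧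
    substIter σ n [a] = w ++ a :: u

/-- `σ` is tame: no letter of `A_l` is left or right isolated. -/
def Tame (σ : A → List A) : Prop :=
  ∀ a ∈ longLetters σ, ¬ LeftIsolated σ a ∧ ¬ RightIsolated σ a

/-- `σ` is `l`-primitive. -/
def LPrimitive (σ : A → List A) : Prop :=
  ∃ n : ℕ, 1 ≤ n ∧ ∀ a ∈ longLetters σ, ∀ b ∈ longLetters σ, a ∈ substIter σ n [b]

/-- `a → b` : `b` occurs in `σⁿ(a)` for some `n ≥ 1`. -/
def arrow (σ : A → List A) (a b : A) : Prop :=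
  ∃ n : ℕ, 1 ≤ n ∧ b ∈ substIter σ n [a]

/-- `A_{∘,l} = {a ∈ A_l | a → a}`. -/
def circLong (σ : A → List A) : Set A := {a | a ∈ longLetters σ ∧ arrow σ a a}

/-- `A_{min,l}`: letters of `A_l` minimal in `A_l`. -/
def minLong (σ : A → List A) : Set A :=
  {a | a ∈ longLetters σ ∧ ∀ b ∈ longLetters σ, arrow σ a b → arrow σ b a}

/-- `x` is a periodic point of the shift. -/
def IsPeriodicPoint (x : ℤ → A) : Prop := ∃ p : ℕ, 1 ≤ p ∧ shiftT^[p] x = x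

/-- `X` is a single periodic orbit. -/
def IsSinglePeriodicOrbit (X : Set (ℤ → A)) : Prop :=
  ∃ x : ℤ → A, IsPeriodicPoint x ∧ X = Set.range fun i : ℤ => fun j => x (j + i)

/-- `y = σ(x)` : `y` is obtained from `x` by applying `σ` to each coordinate and
concatenating, with `σ(x(0))` placed starting at coordinate `0`. -/
def IsSubstImage (σ : A → List A) (x y : ℤ → A) : Prop :=
  ∃ o : ℤ → ℤ, o 0 = 0 ∧ (∀ i : ℤ, o (i + 1) = o i + (σ (x i)).length) ∧
    ∀ i : ℤ, factorOf y (o i) (o (i + 1) - 1) = σ (x i)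

/-- The map `s` on nonempty subsets of `A_l`: `s(F) = ⋃_{a ∈ F} (Lett(σ(a)) ∩ A_l)`. -/
def sMap (σ : A → List A) (F : Set A) : Set A :=
  {b | b ∈ longLetters σ ∧ ∃ a ∈ F, b ∈ σ a}

end SubstMin

/-!
If `σⁿ(a) = u a w` with `u` a word of short letters, the lengths of the iterates `σᵏ(u)` are
bounded, so the orbit of `u` is finite and some power `f = σ^M` with `n ∣ M` satisfies
`f (f u) = f u`. Then `f(a) = U a W` with `f (f U) = f U` for a nonempty `U`, hence
`f^(m+1)(a)` begins with `(f U)^m`: arbitrarily high powers of one word lie in `L(σ)`. The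
bi-infinite periodic word with period `f U` therefore lies in `X_σ`; its orbit is finite, hence
closed, and shift-invariant, so by minimality it is all of `X_σ`. Right isolation is left
isolation for the reversed substitution `a ↦ (σ a).reverse`.
-/

theorem Function.exists_isFixedPt_iterate_iterate_of_finite_range {α : Type*} {g : α → α} {x : α}
    (hx : (Set.range fun k => g^[k] x).Finite) {n : ℕ} (hn : 0 < n) :
    ∃ M, 0 < M ∧ n ∣ M ∧ Function.IsFixedPt g^[M] (g^[M] x) := by
  obtain ⟨p, q, hpq, hxpq⟩ :=
    hx.exists_lt_map_eq_of_forall_mem (f := fun k => g^[k] x) (Set.mem_range_self ·)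
  have hd : 0 < q - p := Nat.sub_pos_of_lt hpq
  have hper : Function.IsPeriodicPt g (q - p) (g^[p] x) := by
    rw [Function.IsPeriodicPt, Function.IsFixedPt, ← Function.iterate_add_apply,
      Nat.sub_add_cancel hpq.le]
    exact hxpq.symm
  have hpM : p ≤ n * (q - p) * (p + 1) :=
    le_trans (Nat.le_succ p) (Nat.le_mul_of_pos_left _ (by positivity))
  refine ⟨n * (q - p) * (p + 1), by positivity, ⟨(q - p) * (p + 1), by ring⟩, ?_⟩
  have := ((hper.const_mul n).mul_const (p + 1)).apply_iterate (n * (q - p) * (p + 1) - p)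
  rwa [← Function.iterate_add_apply, Nat.sub_add_cancel hpM] at this

namespace SubstMin

variable {A : Type*} {σ : A → List A}

section Iterates

variable (σ)

lemma substIter_add (m n : ℕ) (w : List A) :
    substIter σ (m + n) w = substIter σ m (substIter σ n w) :=
  Function.iterate_add_apply _ m n w

lemma substIter_succ' (n : ℕ) (w : List A) :
    substIter σ (n + 1) w = substW σ (substIter σ n w) :=
  Function.iterate_succ_apply' _ n w

lemma substIter_comm (m n : ℕ) (w : List A) :
    substIter σ m (substIter σ n w) = substIter σ n (substIter σ m w) := by
  rw [← substIter_add, ← substIter_add, add_comm]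

lemma substIter_append (k : ℕ) (x y : List A) :
    substIter σ k (x ++ y) = substIter σ k x ++ substIter σ k y := by
  induction k generalizing x y with
  | zero => rfl
  | succ k ih =>
    simp only [substIter, Function.iterate_succ_apply, substW, List.flatMap_append]
    exact ih _ _

lemma substIter_nil (k : ℕ) : substIter σ k [] = [] := by
  simpa using substIter_append σ k [] []

lemma substIter_flatten (k : ℕ) (l : List (List A)) :
    substIter σ k l.flatten = (l.map (substIter σ k)).flatten := by
  induction l with
  | nil => exact substIter_nil σ k
  | cons v l ih => rw [List.flatten_cons, substIter_append, ih, List.map_cons, List.flatten_cons]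

variable {σ}

lemma substIter_ne_nil (h : ∀ a, σ a ≠ []) {w : List A} (hw : w ≠ []) (k : ℕ) :
    substIter σ k w ≠ [] := by
  induction k with
  | zero => exact hw
  | succ k ih =>
    obtain ⟨b, v, hbv⟩ := List.exists_cons_of_ne_nil ih
    rw [substIter_succ', hbv]
    simp [substW, h b]

lemma monotone_length_substIter (h : ∀ a, σ a ≠ []) (w : List A) :
    Monotone fun k => (substIter σ k w).length := by
  refine monotone_nat_of_le_succ fun k => ?_
  rw [substIter_succ']
  generalize substIter σ k w = v
  induction v with
  | nil => simp
  | cons b v ih =>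
    simp only [substW, List.flatMap_cons, List.length_append, List.length_cons] at ih ⊢
    have := List.length_pos_iff.mpr (h b)
    omega

end Iterates

section ShortLetters

lemma exists_length_substIter_le_of_mem_shortLetters (h : ∀ a, σ a ≠ []) {a : A}
    (ha : a ∈ shortLetters σ) : ∃ B, ∀ k, (substIter σ k [a]).length ≤ B := by
  by_contra hB
  push Not at hB
  exact ha <| (monotone_length_substIter h [a]).tendsto_atTop_atTop_iff.mpr
    fun B => (hB B).imp fun _ => le_of_lt

lemma exists_length_substIter_le (h : ∀ a, σ a ≠ []) {u : List A}
    (hu : ∀ b ∈ u, b ∈ shortLetters σ) : ∃ B, ∀ k, (substIter σ k u).length ≤ B := by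
  induction u with
  | nil => exact ⟨0, fun k => by simp [substIter_nil]⟩
  | cons b u ih =>
    obtain ⟨B₁, hB₁⟩ := exists_length_substIter_le_of_mem_shortLetters h (hu b (by simp))
    obtain ⟨B₂, hB₂⟩ := ih fun c hc => hu c (by simp [hc])
    refine ⟨B₁ + B₂, fun k => ?_⟩
    rw [← List.singleton_append, substIter_append, List.length_append]
    exact Nat.add_le_add (hB₁ k) (hB₂ k)

lemma finite_range_substIter [Finite A] (h : ∀ a, σ a ≠ []) {u : List A}
    (hu : ∀ b ∈ u, b ∈ shortLetters σ) : (Set.range fun k => substIter σ k u).Finite := by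
  obtain ⟨B, hB⟩ := exists_length_substIter_le h hu
  exact (List.finite_length_le A B).subset <| Set.range_subset_iff.mpr hB

end ShortLetters

section Isolated

variable {a : A}

lemma exists_substIter_eq_append_isFixedPt [Finite A] (h : ∀ b, σ b ≠ []) {n : ℕ}
    (hn : 1 ≤ n) {u w : List A} (hune : u ≠ []) (hu : ∀ b ∈ u, b ∈ shortLetters σ)
    (ha : substIter σ n [a] = u ++ a :: w) :
    ∃ M, 1 ≤ M ∧ ∃ U W : List A, U ≠ [] ∧
      Function.IsFixedPt (substIter σ M) (substIter σ M U) ∧ substIter σ M [a] = U ++ a :: W := by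
  obtain ⟨M, hM, ⟨k, rfl⟩, hfix⟩ :=
    Function.exists_isFixedPt_iterate_iterate_of_finite_range (finite_range_substIter h hu) hn
  change Function.IsFixedPt (substIter σ (n * k)) (substIter σ (n * k) u) at hfix
  -- With `f := σ^(n * k)`, the words `U` with `f (f U) = f U` are closed under concatenation
  -- and under `σⁿ`, which commutes with `f`.
  have key : ∀ j : ℕ, ∃ U W : List A, U ≠ [] ∧
      Function.IsFixedPt (substIter σ (n * k)) (substIter σ (n * k) U) ∧
      substIter σ (n * (j + 1)) [a] = U ++ a :: W := by
    intro j
    induction j with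
    | zero => exact ⟨u, w, hune, hfix, by rwa [zero_add, mul_one]⟩
    | succ j ih =>
      obtain ⟨U, W, -, hfU, hj⟩ := ih
      refine ⟨substIter σ n U ++ u, w ++ substIter σ n W, by simp [hune], ?_, ?_⟩
      · simp only [Function.IsFixedPt, substIter_append] at hfix hfU ⊢
        rw [substIter_comm σ (n * k) n U, substIter_comm σ (n * k) n, hfU, hfix]
      · rw [show n * (j + 1 + 1) = n + n * (j + 1) by ring, substIter_add, hj,
          ← List.singleton_append, substIter_append, substIter_append, ha]
        simp
  obtain ⟨U, W, hU, hfU, hk⟩ := key (k - 1)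
  refine ⟨n * k, hM, U, W, hU, hfU, ?_⟩
  rwa [Nat.sub_add_cancel (Nat.pos_of_mul_pos_left hM)] at hk

lemma substIter_eq_flatten_replicate_append {M : ℕ} {U W : List A}
    (hfix : Function.IsFixedPt (substIter σ M) (substIter σ M U))
    (ha : substIter σ M [a] = U ++ a :: W) (m : ℕ) :
    ∃ t, substIter σ (M * (m + 1)) [a] =
      (List.replicate m (substIter σ M U)).flatten ++ U ++ a :: t := by
  induction m with
  | zero => exact ⟨W, by simpa using ha⟩
  | succ m ih =>
    obtain ⟨t, ht⟩ := ih
    refine ⟨W ++ substIter σ M t, ?_⟩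
    rw [show M * (m + 1 + 1) = M + M * (m + 1) by ring, substIter_add, ht,
      ← List.singleton_append, substIter_append, substIter_append, substIter_append,
      substIter_flatten, List.map_replicate, hfix, ha, List.replicate_succ',
      List.flatten_append]
    simp

lemma exists_flatten_replicate_mem_lang_of_leftIsolated [Finite A] (h : ∀ b, σ b ≠ [])
    (hl : LeftIsolated σ a) :
    ∃ P : List A, P ≠ [] ∧ ∀ m, (List.replicate m P).flatten ∈ lang σ := by
  obtain ⟨n, hn, u, w, hune, hu, ha⟩ := hl
  obtain ⟨M, hM, U, W, hU, hfix, hMa⟩ := exists_substIter_eq_append_isFixedPt h hn hune hu ha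
  refine ⟨substIter σ M U, substIter_ne_nil h hU M, fun m => ?_⟩
  obtain ⟨t, ht⟩ := substIter_eq_flatten_replicate_append hfix hMa m
  refine ⟨a, M * (m + 1), Nat.one_le_iff_ne_zero.mpr (by positivity), ?_⟩
  rw [ht, List.append_assoc]
  exact (List.prefix_append _ _).isInfix

lemma substIter_reverse_comp (n : ℕ) (w : List A) :
    substIter (List.reverse ∘ σ) n w = (substIter σ n w.reverse).reverse := by
  induction n generalizing w with
  | zero => simp [substIter]
  | succ n ih => rw [substIter_succ', substIter_succ', ih, substW, substW, List.reverse_flatMap]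

lemma shortLetters_reverse_comp : shortLetters (List.reverse ∘ σ) = shortLetters σ := by
  simp [shortLetters, longLetters, substIter_reverse_comp]

lemma leftIsolated_reverse_comp_of_rightIsolated (hr : RightIsolated σ a) :
    LeftIsolated (List.reverse ∘ σ) a := by
  obtain ⟨n, hn, u, w, hune, hu, ha⟩ := hr
  refine ⟨n, hn, u.reverse, w.reverse, by simpa using hune, ?_, ?_⟩
  · simpa [shortLetters_reverse_comp] using hu
  · simp [substIter_reverse_comp, ha]

lemma exists_flatten_replicate_mem_lang_of_rightIsolated [Finite A] (h : ∀ b, σ b ≠ [])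
    (hr : RightIsolated σ a) :
    ∃ P : List A, P ≠ [] ∧ ∀ m, (List.replicate m P).flatten ∈ lang σ := by
  obtain ⟨P, hP, hPm⟩ := exists_flatten_replicate_mem_lang_of_leftIsolated
    (fun b => by simpa using h b) (leftIsolated_reverse_comp_of_rightIsolated hr)
  refine ⟨P.reverse, by simpa using hP, fun m => ?_⟩
  obtain ⟨b, N, hN, hinf⟩ := hPm m
  refine ⟨b, N, hN, ?_⟩
  rw [← List.reverse_infix]
  simpa [substIter_reverse_comp, List.reverse_flatten] using hinf

end Isolated

section PeriodicOrbit

lemma shiftT_iterate (x : ℤ → A) (k : ℕ) : shiftT^[k] x = fun j => x (j + k) := by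
  induction k with
  | zero => simp
  | succ k ih =>
    rw [Function.iterate_succ_apply', ih]
    funext j
    simp only [shiftT]
    push_cast
    ring_nf

lemma isSinglePeriodicOrbit_of_periodic [TopologicalSpace A] [T1Space A] {X : Set (ℤ → A)}
    (hX : IsMinimalSubshift X) {x : ℤ → A} {p : ℕ} (hp : 0 < p) (hx : Function.Periodic x p)
    (hxX : ∀ i : ℤ, (fun j => x (j + i)) ∈ X) : IsSinglePeriodicOrbit X := by
  set orbit : ℤ → ℤ → A := fun i j => x (j + i)
  have horbit : Function.Periodic orbit p := fun i => funext fun j => by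
    simp only [orbit, ← add_assoc, hx _]
  have hshift : shiftT ∘ orbit = orbit ∘ (· + 1) := by
    funext i j
    simp only [Function.comp, shiftT, orbit]
    ring_nf
  refine ⟨x, ⟨p, hp, by rw [shiftT_iterate]; exact hx.funext⟩, (hX.2 _ ?_ ?_ ?_ ?_).symm⟩
  · rintro _ ⟨i, rfl⟩
    exact hxX i
  · exact Set.range_nonempty _
  · refine (((Set.finite_Ico 0 (p : ℤ)).image orbit).subset ?_).isClosed
    rintro _ ⟨i, rfl⟩
    have hpz : (0 : ℤ) < p := by exact_mod_cast hp
    refine ⟨i % p, ⟨Int.emod_nonneg i hpz.ne', Int.emod_lt_of_pos i hpz⟩, ?_⟩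
    conv_rhs => rw [← Int.emod_add_mul_ediv i p, mul_comm]
    exact (horbit.int_mul _ _).symm
  · rw [← Set.range_comp, hshift, (add_right_surjective (1 : ℤ)).range_comp]

lemma mem_lang_of_infix {v w : List A} (hvw : v <:+: w) (hw : w ∈ lang σ) :
    v ∈ lang σ :=
  let ⟨a, n, hn, hwa⟩ := hw
  ⟨a, n, hn, hvw.trans hwa⟩

-- The coercion `ℕ → ℤ` inside `factorOf` is elaborated as a monadic lift of the whole list.
lemma factorOf_eq_map_range (x : ℤ → A) (s t : ℤ) :
    factorOf x s t = (List.range (t - s + 1).toNat).map fun i : ℕ => x (s + i) := by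
  simp [factorOf, ← List.map_eq_flatMap]

lemma factorOf_add_const (x : ℤ → A) (i s t : ℤ) :
    factorOf (fun j => x (j + i)) s t = factorOf x (s + i) (t + i) := by
  simp only [factorOf, show t + i - (s + i) + 1 = t - s + 1 by ring]
  refine List.map_congr_left fun k _ => ?_
  ring_nf

lemma map_range_mul_of_periodic {x : ℤ → A} {p : ℕ} (hx : Function.Periodic x p) (M : ℕ) :
    (List.range (M * p)).map (fun i : ℕ => x i) =
      (List.replicate M ((List.range p).map fun i : ℕ => x i)).flatten := by
  induction M with
  | zero => simp
  | succ M ih =>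
    rw [Nat.succ_mul, List.range_add, List.map_append, ih, List.replicate_succ',
      List.flatten_append, List.flatten_singleton, List.map_map]
    congr 1
    refine List.map_congr_left fun i _ => ?_
    simpa [add_comm] using hx.nat_mul M i

lemma factorOf_infix_of_periodic {x : ℤ → A} {p : ℕ} (hp : 0 < p) (hx : Function.Periodic x p)
    (s t : ℤ) :
    ∃ M, factorOf x s t <:+: (List.replicate M ((List.range p).map fun i : ℕ => x i)).flatten := by
  set r := (s % p).toNat
  set L := (t - s + 1).toNat
  have hr : (r : ℤ) + (s / p) * p = s := by
    rw [Int.toNat_of_nonneg (Int.emod_nonneg s (by omega)), mul_comm, Int.emod_add_mul_ediv]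
  have hfactor : factorOf x s t = (List.range L).map fun i : ℕ => x (r + i : ℕ) := by
    rw [factorOf_eq_map_range]
    refine List.map_congr_left fun i _ => ?_
    have := hx.int_mul (s / p) (r + i)
    rw [Int.cast_id] at this
    rw [← hr, add_right_comm, this]
    push_cast
    rfl
  have hML : r + L ≤ (r + L) * p := Nat.le_mul_of_pos_right _ hp
  refine ⟨r + L, ?_⟩
  rw [← map_range_mul_of_periodic hx, ← Nat.add_sub_cancel' hML, List.range_add, List.range_add,
    List.map_append, List.map_append, List.map_map, hfactor]
  exact List.infix_append _ _ _

def periodicExtension (P : List A) (hP : P ≠ []) : ℤ → A := fun j =>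
  P[(j % P.length).toNat]'(by
    have hp : (0 : ℤ) < P.length := by exact_mod_cast List.length_pos_iff.mpr hP
    have := Int.emod_lt_of_pos j hp
    have := Int.emod_nonneg j hp.ne'
    omega)

lemma periodic_periodicExtension (P : List A) (hP : P ≠ []) :
    Function.Periodic (periodicExtension P hP) P.length := fun j => by
  simp [periodicExtension]

lemma map_range_periodicExtension (P : List A) (hP : P ≠ []) :
    (List.range P.length).map (fun i : ℕ => periodicExtension P hP i) = P := by
  refine List.ext_getElem (by simp) fun i _ hi => ?_
  simp only [List.getElem_map, List.getElem_range, periodicExtension,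
    Int.emod_eq_of_lt (Int.natCast_nonneg i) (Int.ofNat_lt.mpr hi), Int.toNat_natCast]

lemma isSinglePeriodicOrbit_of_flatten_replicate_mem_lang [TopologicalSpace A] [T1Space A]
    (hmin : IsMinimalSubshift (XSub σ)) {P : List A} (hP : P ≠ [])
    (hPm : ∀ m, (List.replicate m P).flatten ∈ lang σ) : IsSinglePeriodicOrbit (XSub σ) := by
  refine isSinglePeriodicOrbit_of_periodic hmin (List.length_pos_iff.mpr hP)
    (periodic_periodicExtension P hP) fun i s t _ => ?_
  obtain ⟨M, hM⟩ := factorOf_infix_of_periodic (List.length_pos_iff.mpr hP)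
    (periodic_periodicExtension P hP) (s + i) (t + i)
  rw [map_range_periodicExtension] at hM
  rw [factorOf_add_const]
  exact mem_lang_of_infix hM (hPm M)

end PeriodicOrbit

end SubstMin

/-- If `(X_σ, T)` is minimal and not a single periodic orbit, then `σ`
is tame. -/
theorem statement13 {A : Type*} [Fintype A] [TopologicalSpace A] [DiscreteTopology A]
    (σ : A → List A) (hσ : SubstMin.IsSubstitution σ)
    (hmin : SubstMin.IsMinimalSubshift (SubstMin.XSub σ))
    (hnp : ¬ SubstMin.IsSinglePeriodicOrbit (SubstMin.XSub σ)) :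
    SubstMin.Tame σ := by
  intro a _
  constructor
  · intro hl
    obtain ⟨P, hP, hPm⟩ := SubstMin.exists_flatten_replicate_mem_lang_of_leftIsolated hσ.1 hl
    exact hnp (SubstMin.isSinglePeriodicOrbit_of_flatten_replicate_mem_lang hmin hP hPm)
  · intro hr
    obtain ⟨P, hP, hPm⟩ := SubstMin.exists_flatten_replicate_mem_lang_of_rightIsolated hσ.1 hr
    exact hnp (SubstMin.isSinglePeriodicOrbit_of_flatten_replicate_mem_lang hmin hP hPm)
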